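/- arXiv:1401.0041 — 6 statements merged into one kernel-verified Lean document; each statement's English description precedes it below -/
import Mathlib

section
/- Let A be a compact subset of ℝ² and let D be a bounded connected component of ℝ² ∖ A. Then the diameter of D does not exceed the diameter of A. -/
/-- A space has the fixed point property: every continuous self-map has a fixed point. -/
def HasFPP (Y : Type*) [TopologicalSpace Y] : Prop :=
  ∀ f : Y → Y, Continuous f → ∃ x, f x = x

/-- A space has the periodic point property: every continuous self-map has a periodic point. -/
def HasPPP (Y : Type*) [TopologicalSpace Y] : Prop :=
  ∀ f : Y → Y, Continuous f → ∃ x, ∃ n : ℕ, 1 ≤ n ∧ f^[n] x = x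

/-- Local fixed point property: there is an open basis whose members have closures with FPP. -/
def HasLFPP (Y : Type*) [TopologicalSpace Y] : Prop :=
  ∃ 𝓑 : Set (Set Y), TopologicalSpace.IsTopologicalBasis 𝓑 ∧
    ∀ B ∈ 𝓑, HasFPP ↥(closure B)

/-- Weak local fixed point property. -/
def HasWLFPP (Y : Type*) [TopologicalSpace Y] : Prop :=
  ∃ 𝓑 : Set (Set Y), TopologicalSpace.IsTopologicalBasis 𝓑 ∧
    ∀ B ∈ 𝓑, ∀ f : Y → Y, Continuous f → f '' closure B ⊆ B → ∃ x ∈ B, f x = x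

/-- Local periodic point property. -/
def HasLPPP (Y : Type*) [TopologicalSpace Y] : Prop :=
  ∃ 𝓑 : Set (Set Y), TopologicalSpace.IsTopologicalBasis 𝓑 ∧
    ∀ B ∈ 𝓑, HasPPP ↥(closure B)

/-- Weak local periodic point property. -/
def HasWLPPP (Y : Type*) [TopologicalSpace Y] : Prop :=
  ∃ 𝓑 : Set (Set Y), TopologicalSpace.IsTopologicalBasis 𝓑 ∧
    ∀ B ∈ 𝓑, ∀ f : Y → Y, Continuous f → f '' closure B ⊆ B →
      ∃ x ∈ B, ∃ n : ℕ, 1 ≤ n ∧ f^[n] x = x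

/-- A subset is a simple closed curve if it is homeomorphic to the unit circle. -/
def IsSimpleClosedCurve {α : Type*} [TopologicalSpace α] (S : Set α) : Prop :=
  Nonempty (↥S ≃ₜ ↥(Metric.sphere (0 : EuclideanSpace ℝ (Fin 2)) 1))

/-- Covering dimension at most `n`: every finite open cover admits an open shrinking
of order at most `n + 1`. -/
def CoveringDimLE (Y : Type*) [TopologicalSpace Y] (n : ℕ) : Prop :=
  ∀ (ι : Type) [Finite ι] (U : ι → Set Y), (∀ i, IsOpen (U i)) → (⋃ i, U i) = Set.univ →
    ∃ V : ι → Set Y, (∀ i, IsOpen (V i)) ∧ (∀ i, V i ⊆ U i) ∧ (⋃ i, V i) = Set.univ ∧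
      ∀ y : Y, {i | y ∈ V i}.ncard ≤ n + 1

/-- A dendrite: a locally connected (metric) continuum containing no simple closed curve. -/
def IsDendrite {α : Type*} [TopologicalSpace α] (D : Set α) : Prop :=
  IsCompact D ∧ IsConnected D ∧ LocallyConnectedSpace ↥D ∧ ∀ S ⊆ D, ¬ IsSimpleClosedCurve S

/-- A local dendrite: every point has a closed neighborhood which is a dendrite. -/
def IsLocalDendrite (Y : Type*) [TopologicalSpace Y] : Prop :=
  ∀ y : Y, ∃ N : Set Y, N ∈ nhds y ∧ IsClosed N ∧ IsDendrite N

/-!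
The closed convex hull `K` of `A` has the same diameter as `A`, so it suffices to show that a
bounded component `D` of `Aᶜ` lies in `K`. If `y ∈ D` were outside `K`, Hahn–Banach would give an
open half-space containing `y` and missing `K ⊇ A`; being connected, it would lie in `D`, but no
half-space is bounded.
-/

open Set Metric Bornology

variable {E : Type*} [NormedAddCommGroup E] [NormedSpace ℝ E]

theorem ContinuousLinearMap.not_isBounded_setOf_lt {f : StrongDual ℝ E} (hf : f ≠ 0) (u : ℝ) :
    ¬IsBounded {z | u < f z} := by
  intro hbd
  have himage : f '' {z | u < f z} = Ioi u := by
    ext t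
    obtain ⟨z, rfl⟩ := LinearMap.surjective_of_ne_zero (f := (f : E →ₗ[ℝ] ℝ))
      (by exact_mod_cast hf) t
    exact ⟨fun ⟨w, hw, hwz⟩ => hwz ▸ hw, fun hz => ⟨z, hz, rfl⟩⟩
  have hbdd := (f.lipschitz.isBounded_image hbd).bddAbove
  rw [himage] at hbdd
  exact not_bddAbove_Ioi u hbdd

theorem connectedComponentIn_compl_subset_closure_convexHull {A : Set E} (hA : A.Nonempty)
    {x : E} (hbd : IsBounded (connectedComponentIn Aᶜ x)) :
    connectedComponentIn Aᶜ x ⊆ closure (convexHull ℝ A) := by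
  intro y hy
  by_contra hyK
  obtain ⟨f, u, hKu, huy⟩ :=
    geometric_hahn_banach_closed_point (convex_convexHull ℝ A).closure isClosed_closure hyK
  obtain ⟨a, ha⟩ := hA
  have hfa : f a < u := hKu a (subset_closure (subset_convexHull ℝ A ha))
  have hf : f ≠ 0 := by
    rintro rfl
    exact (hfa.trans huy).false
  have hHA : {z | u < f z} ⊆ Aᶜ := fun z hz hzA =>
    (hKu z (subset_closure (subset_convexHull ℝ A hzA))).not_gt hz
  have hHcomp : {z | u < f z} ⊆ connectedComponentIn Aᶜ x := by
    rw [connectedComponentIn_eq hy]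
    exact (convex_halfSpace_gt f.isLinear u).isPreconnected.subset_connectedComponentIn huy hHA
  exact f.not_isBounded_setOf_lt hf u (hbd.subset hHcomp)

theorem diam_connectedComponentIn_compl_le [Nontrivial E] {A : Set E} (hA : IsBounded A)
    {x : E} (hbd : IsBounded (connectedComponentIn Aᶜ x)) :
    diam (connectedComponentIn Aᶜ x) ≤ diam A := by
  rcases A.eq_empty_or_nonempty with rfl | hA₀
  · rw [compl_empty, connectedComponentIn_univ,
      PreconnectedSpace.connectedComponent_eq_univ] at hbd
    exact absurd hbd (NormedSpace.unbounded_univ ℝ E)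
  calc diam (connectedComponentIn Aᶜ x)
      ≤ diam (closure (convexHull ℝ A)) :=
        diam_mono (connectedComponentIn_compl_subset_closure_convexHull hA₀ hbd)
          (isBounded_convexHull.mpr hA).closure
    _ = diam A := by rw [diam_closure, convexHull_diam]

/-- The diameter of a bounded component of the complement of a compact planar set does not
exceed the diameter of the set. -/
theorem stmt_5 (A : Set (EuclideanSpace ℝ (Fin 2))) (hA : IsCompact A)
    (D : Set (EuclideanSpace ℝ (Fin 2)))
    (hD : ∃ x ∈ Aᶜ, D = connectedComponentIn Aᶜ x)
    (hbd : Bornology.IsBounded D) :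
    Metric.diam D ≤ Metric.diam A := by
  obtain ⟨x, -, rfl⟩ := hD
  exact diam_connectedComponentIn_compl_le hA.isBounded hbd
end

section
/- Let A be a compact connected subset of ℝ² and let A' be the union of A with all bounded connected components of ℝ² ∖ A. Then A' is compact and connected, and ℝ² ∖ A' is connected (so A' does not separate the plane). -/
open Set Metric Bornology

local notation "E" => EuclideanSpace ℝ (Fin 2)

lemma rank_E : 1 < Module.rank ℝ E := by
  have : Module.finrank ℝ E = 2 := finrank_euclideanSpace_fin
  rw [← Module.finrank_eq_rank, this]
  norm_num

lemma exists_norm_gt_E (r : ℝ) : ∃ x : E, r < ‖x‖ := by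
  refine ⟨EuclideanSpace.single (0 : Fin 2) (|r| + 1), ?_⟩
  rw [EuclideanSpace.norm_single, Real.norm_eq_abs,
    abs_of_nonneg (by positivity : (0:ℝ) ≤ |r| + 1)]
  linarith [le_abs_self r]

lemma isConnected_compl_closedBall_E {R : ℝ} (hR : 0 ≤ R) :
    IsConnected ((Metric.closedBall (0 : E) R)ᶜ) := by
  have hprod : IsConnected ((Set.Ioi R) ×ˢ (Metric.sphere (0 : E) 1)) :=
    isConnected_Ioi.prod (isConnected_sphere rank_E 0 zero_le_one)
  have hcont : Continuous fun p : ℝ × E => p.1 • p.2 :=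
    continuous_fst.smul continuous_snd
  have himg : (fun p : ℝ × E => p.1 • p.2) '' ((Set.Ioi R) ×ˢ (Metric.sphere (0 : E) 1))
      = (Metric.closedBall (0 : E) R)ᶜ := by
    apply Set.Subset.antisymm
    · rintro - ⟨⟨t, y⟩, ⟨ht, hy⟩, rfl⟩
      simp only [Set.mem_Ioi] at ht
      rw [mem_sphere_zero_iff_norm] at hy
      simp only [Set.mem_compl_iff, mem_closedBall_zero_iff, not_le, norm_smul, hy,
        mul_one, Real.norm_eq_abs]
      rw [abs_of_nonneg (le_of_lt (lt_of_le_of_lt hR ht))]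
      exact ht
    · intro x hx
      rw [Set.mem_compl_iff, mem_closedBall_zero_iff, not_le] at hx
      have hx0 : ‖x‖ ≠ 0 := ne_of_gt (lt_of_le_of_lt hR hx)
      refine ⟨(‖x‖, ‖x‖⁻¹ • x), ⟨hx, ?_⟩, ?_⟩
      · rw [mem_sphere_zero_iff_norm, norm_smul, norm_inv, norm_norm,
          inv_mul_cancel₀ hx0]
      · simp only
        rw [smul_smul, mul_inv_cancel₀ hx0, one_smul]
  rw [← himg]
  exact hprod.image _ hcont.continuousOn

/-- Filling in the bounded complementary components of a compact connected planar set yields a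
compact connected set which does not separate the plane. -/
theorem stmt_6 (A : Set (EuclideanSpace ℝ (Fin 2)))
    (hAcomp : IsCompact A) (hAconn : IsConnected A)
    (A' : Set (EuclideanSpace ℝ (Fin 2)))
    (hA' : A' = A ∪ ⋃₀ {D | (∃ x ∈ Aᶜ, D = connectedComponentIn Aᶜ x) ∧
      Bornology.IsBounded D}) :
    IsCompact A' ∧ IsConnected A' ∧ IsConnected A'ᶜ := by
  classical
  set 𝒟 : Set (Set E) := {D | (∃ x ∈ Aᶜ, D = connectedComponentIn Aᶜ x) ∧
      Bornology.IsBounded D} with h𝒟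
  have hAopen : IsOpen (Aᶜ) := hAcomp.isClosed.isOpen_compl
  -- bound on A
  obtain ⟨r, hr⟩ : ∃ r, A ⊆ Metric.closedBall (0 : E) r :=
    hAcomp.isBounded.subset_closedBall 0
  set R : ℝ := max r 0 with hRdef
  have hR0 : 0 ≤ R := le_max_right r 0
  have hAR : A ⊆ Metric.closedBall (0 : E) R :=
    hr.trans (Metric.closedBall_subset_closedBall (le_max_left r 0))
  set S : Set E := (Metric.closedBall (0 : E) R)ᶜ with hSdef
  have hScon : IsConnected S := isConnected_compl_closedBall_E hR0
  have hSA : S ⊆ Aᶜ := Set.compl_subset_compl.2 hAR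
  obtain ⟨x₀, hx₀⟩ : S.Nonempty := by
    obtain ⟨x, hx⟩ := exists_norm_gt_E R
    exact ⟨x, by simpa [hSdef, mem_closedBall_zero_iff] using hx.not_ge⟩
  set W : Set E := connectedComponentIn Aᶜ x₀ with hWdef
  have hSW : S ⊆ W := hScon.isPreconnected.subset_connectedComponentIn hx₀ hSA
  have hWA : W ⊆ Aᶜ := connectedComponentIn_subset _ _
  have hWopen : IsOpen W := hAopen.connectedComponentIn
  -- W is unbounded
  have hWnb : ¬ Bornology.IsBounded W := by
    intro hb
    obtain ⟨r', hr'⟩ := hb.subset_closedBall 0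
    obtain ⟨x, hx⟩ := exists_norm_gt_E (max R r')
    have hxS : x ∈ S := by
      simp only [hSdef, Set.mem_compl_iff, mem_closedBall_zero_iff, not_le]
      exact lt_of_le_of_lt (le_max_left R r') hx
    have := hr' (hSW hxS)
    rw [mem_closedBall_zero_iff] at this
    exact absurd this (not_le.2 (lt_of_le_of_lt (le_max_right R r') hx))
  -- every unbounded component equals W
  have hcomp_eq : ∀ y ∈ Aᶜ, ¬ Bornology.IsBounded (connectedComponentIn Aᶜ y) →
      connectedComponentIn Aᶜ y = W := by
    intro y hy hnb
    have : ¬ connectedComponentIn Aᶜ y ⊆ Metric.closedBall (0 : E) R := by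
      intro h
      exact hnb ((Metric.isBounded_closedBall).subset h)
    obtain ⟨z, hz, hz'⟩ := Set.not_subset.1 this
    have hzS : z ∈ S := hz'
    have h1 : connectedComponentIn Aᶜ y = connectedComponentIn Aᶜ z :=
      connectedComponentIn_eq hz
    have h2 : W = connectedComponentIn Aᶜ z := connectedComponentIn_eq (hSW hzS)
    rw [h1, h2]
  -- complement of A' is W
  have hcompl : A'ᶜ = W := by
    ext y
    simp only [hA', Set.mem_compl_iff, Set.mem_union, Set.mem_sUnion, not_or, not_exists]
    constructor
    · rintro ⟨hyA, hyD⟩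
      push_neg at hyD
      have hyAc : y ∈ Aᶜ := hyA
      have hyin : y ∈ connectedComponentIn Aᶜ y := mem_connectedComponentIn hyAc
      have hnb : ¬ Bornology.IsBounded (connectedComponentIn Aᶜ y) := by
        intro hb
        exact hyD _ ⟨⟨y, hyAc, rfl⟩, hb⟩ hyin
      rw [← hcomp_eq y hyAc hnb]
      exact hyin
    · intro hyW
      refine ⟨fun hyA => (hWA hyW) hyA, ?_⟩
      rintro D ⟨⟨⟨x, hx, rfl⟩, hDb⟩, hyD⟩
      have h1 : connectedComponentIn Aᶜ x = connectedComponentIn Aᶜ y :=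
        connectedComponentIn_eq hyD
      have h2 : W = connectedComponentIn Aᶜ y := connectedComponentIn_eq hyW
      rw [h1, ← h2] at hDb
      exact hWnb hDb
  -- A' is closed and bounded, hence compact
  have hA'sub : A' ⊆ Metric.closedBall (0 : E) R := by
    intro x hx
    by_contra hxn
    have hxS : x ∈ S := hxn
    have : x ∈ A'ᶜ := hcompl ▸ hSW hxS
    exact this hx
  have hA'closed : IsClosed A' := by
    have hAW : A' = Wᶜ := by rw [← hcompl, compl_compl]
    rw [hAW]
    exact hWopen.isClosed_compl
  have hA'comp : IsCompact A' :=
    (isCompact_closedBall (0:E) R).of_isClosed_subset hA'closed hA'sub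
  -- connectedness of A'
  obtain ⟨a, ha⟩ := hAconn.nonempty
  -- key : for each bounded component D, closure D \ D ⊆ A and A ∪ D is preconnected
  have hfrontier : ∀ D ∈ 𝒟, closure D \ D ⊆ A := by
    rintro D ⟨⟨x, hx, rfl⟩, hDb⟩ y ⟨hyc, hyD⟩
    by_contra hyA
    have hyAc : y ∈ Aᶜ := hyA
    have hopen : IsOpen (connectedComponentIn Aᶜ y) := hAopen.connectedComponentIn
    have hy' : y ∈ connectedComponentIn Aᶜ y := mem_connectedComponentIn hyAc
    obtain ⟨z, hz1, hz2⟩ := mem_closure_iff.1 hyc _ hopen hy'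
    have h1 : connectedComponentIn Aᶜ y = connectedComponentIn Aᶜ z :=
      connectedComponentIn_eq hz1
    have h2 : connectedComponentIn Aᶜ x = connectedComponentIn Aᶜ z :=
      connectedComponentIn_eq hz2
    rw [h1, ← h2] at hy'
    exact hyD hy'
  have hDconn : ∀ D ∈ 𝒟, IsPreconnected (A ∪ D) ∧ a ∈ A ∪ D := by
    rintro D hD
    obtain ⟨⟨x, hx, hDeq⟩, hDb⟩ := hD
    have hDpre : IsPreconnected D := hDeq ▸ isPreconnected_connectedComponentIn
    have hDopen : IsOpen D := hDeq ▸ hAopen.connectedComponentIn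
    have hDne : D.Nonempty := hDeq ▸ ⟨x, mem_connectedComponentIn hx⟩
    -- closure D ≠ D
    have hne : (closure D \ D).Nonempty := by
      rcases Set.eq_empty_or_nonempty (closure D \ D) with h | h
      · exfalso
        have hclosed : IsClosed D := by
          have : closure D ⊆ D := by
            intro y hy
            by_contra hyD
            exact absurd ⟨y, hy, hyD⟩ (Set.not_nonempty_iff_eq_empty.2 h)
          exact isClosed_of_closure_subset this
        have huniv : D = Set.univ := (isClopen_iff.1 ⟨hclosed, hDopen⟩).resolve_left
          (Set.nonempty_iff_ne_empty.1 hDne)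
        obtain ⟨r', hr'⟩ := hDb.subset_closedBall 0
        obtain ⟨z, hz⟩ := exists_norm_gt_E r'
        have : z ∈ D := huniv ▸ Set.mem_univ z
        have := hr' this
        rw [mem_closedBall_zero_iff] at this
        exact absurd this (not_le.2 hz)
      · exact h
    obtain ⟨p, hp⟩ := hne
    have hpA : p ∈ A := hfrontier D ⟨⟨x, hx, hDeq⟩, hDb⟩ hp
    have hunion : IsPreconnected (A ∪ closure D) :=
      IsPreconnected.union p hpA hp.1 hAconn.isPreconnected hDpre.closure
    have heq : A ∪ closure D = A ∪ D := by
      apply Set.Subset.antisymm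
      · rintro y (hy | hy)
        · exact Or.inl hy
        · by_cases hyD : y ∈ D
          · exact Or.inr hyD
          · exact Or.inl (hfrontier D ⟨⟨x, hx, hDeq⟩, hDb⟩ ⟨hy, hyD⟩)
      · exact Set.union_subset_union_right A subset_closure
    rw [heq] at hunion
    exact ⟨hunion, Or.inl ha⟩
  have hA'conn : IsConnected A' := by
    refine ⟨⟨a, hA' ▸ Or.inl ha⟩, ?_⟩
    have heq : A' = ⋃₀ (insert A ((fun D => A ∪ D) '' 𝒟)) := by
      rw [hA']
      ext y
      simp only [Set.mem_union, Set.mem_sUnion, Set.mem_insert_iff, Set.mem_image]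
      constructor
      · rintro (hy | ⟨D, hD, hyD⟩)
        · exact ⟨A, Or.inl rfl, hy⟩
        · exact ⟨A ∪ D, Or.inr ⟨D, hD, rfl⟩, Or.inr hyD⟩
      · rintro ⟨t, (rfl | ⟨D, hD, rfl⟩), hyt⟩
        · exact Or.inl hyt
        · rcases hyt with hy | hy
          · exact Or.inl hy
          · exact Or.inr ⟨D, hD, hy⟩
    rw [heq]
    apply isPreconnected_sUnion a
    · rintro s (rfl | ⟨D, hD, rfl⟩)
      · exact ha
      · exact (hDconn D hD).2
    · rintro s (rfl | ⟨D, hD, rfl⟩)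
      · exact hAconn.isPreconnected
      · exact (hDconn D hD).1
  refine ⟨hA'comp, hA'conn, ?_⟩
  rw [hcompl]
  exact (isConnected_connectedComponentIn_iff).2 (hSA hx₀)
end

section
/- If a locally connected metric continuum X is not a local dendrite, then for every ε > 0 there exists a simple closed curve S ⊆ X with diameter less than ε; in fact X contains a sequence of simple closed curves whose diameters converge to 0. -/
/-!
A point `y` with no dendrite neighbourhood still has arbitrarily small closed, connected, locally
connected neighbourhoods. These are continua but not dendrites, so each contains a simple closed
curve, necessarily small.

Such neighbourhoods are built as in Whyburn: cover the space at scale `c / 2 ^ k` by finitely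
many closed connected pieces, start from `{y}` and at stage `k` replace the current set by the
union of the pieces of the `k`-th cover that meet it. The closure of the union of all stages is a
connected neighbourhood of diameter at most `4 c` with property S, hence locally connected.
-/

open Metric Set Filter Topology

lemma Set.Finite.sUnion_mem_nhdsWithin_of_isClosed {X : Type*} [TopologicalSpace X]
    {F : Set (Set X)} (hF : F.Finite) (hclosed : ∀ P ∈ F, IsClosed P) {s : Set X}
    (hs : s ⊆ ⋃₀ F) (x : X) : ⋃₀ {P ∈ F | x ∈ P} ∈ 𝓝[s] x := by
  have hG : IsClosed (⋃₀ {P ∈ F | x ∉ P}) := by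
    rw [sUnion_eq_biUnion]
    exact (hF.subset (sep_subset _ _)).isClosed_biUnion fun P hP => hclosed P hP.1
  have hxG : x ∉ ⋃₀ {P ∈ F | x ∉ P} := fun ⟨P, hP, hxP⟩ => hP.2 hxP
  refine mem_nhdsWithin.2 ⟨_, hG.isOpen_compl, hxG, ?_⟩
  rintro z ⟨hzG, hzs⟩
  obtain ⟨P, hPF, hzP⟩ := hs hzs
  by_cases hxP : x ∈ P
  · exact ⟨P, ⟨hPF, hxP⟩, hzP⟩
  · exact absurd ⟨P, ⟨hPF, hxP⟩, hzP⟩ hzG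

section PropertyS

variable {X : Type*} [MetricSpace X]

/-- Whyburn's property S, with closed pieces. -/
def HasPropertyS (N : Set X) : Prop :=
  ∀ δ > 0, ∃ F : Set (Set X), F.Finite ∧ N ⊆ ⋃₀ F ∧
    ∀ P ∈ F, P ⊆ N ∧ IsClosed P ∧ IsPreconnected P ∧ Bornology.IsBounded P ∧ diam P ≤ δ

lemma HasPropertyS.locallyConnectedSpace {N : Set X} (hN : HasPropertyS N) :
    LocallyConnectedSpace N := by
  rw [locallyConnectedSpace_iff_connected_subsets]
  rintro ⟨y, hy⟩ U hU
  obtain ⟨δ, hδ, hball⟩ := Metric.mem_nhds_iff.mp hU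
  obtain ⟨F, hF, hNF, hFP⟩ := hN (δ / 2) (half_pos hδ)
  set M := ⋃₀ {P ∈ F | y ∈ P}
  have hMN : M ⊆ N := sUnion_subset fun P hP => (hFP P hP.1).1
  have hMball : M ⊆ ball y δ := by
    rintro z ⟨P, ⟨hPF, hyP⟩, hzP⟩
    have hP := hFP P hPF
    exact mem_ball.2 <| (dist_le_diam_of_mem hP.2.2.2.1 hzP hyP).trans_lt <|
      hP.2.2.2.2.trans_lt (half_lt_self hδ)
  refine ⟨((↑) : N → X) ⁻¹' M, preimage_coe_mem_nhds_subtype.2 <|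
    hF.sUnion_mem_nhdsWithin_of_isClosed (fun P hP => (hFP P hP).2.1) hNF y, ?_,
    fun z hz => hball (hMball hz)⟩
  rw [← IsInducing.subtypeVal.isPreconnected_image, Subtype.image_preimage_coe,
    inter_eq_self_of_subset_right hMN]
  exact isPreconnected_sUnion y _ (fun P hP => hP.2) fun P hP => (hFP P hP.1).2.2.1

end PropertyS

section Growth

variable {X : Type*}

def growth (𝒞 : ℕ → Set (Set X)) (S : Set X) : ℕ → Set X
  | 0 => S
  | k + 1 => ⋃₀ {P ∈ 𝒞 k | (P ∩ growth 𝒞 S k).Nonempty}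

variable {𝒞 : ℕ → Set (Set X)}

lemma growth_sUnion (F : Set (Set X)) (k : ℕ) :
    growth 𝒞 (⋃₀ F) k = ⋃ B ∈ F, growth 𝒞 B k := by
  induction k with
  | zero => exact sUnion_eq_biUnion
  | succ k ih =>
    ext z
    simp only [growth, ih, mem_sUnion, mem_iUnion, inter_iUnion₂,
      nonempty_iUnion, mem_sep_iff]
    grind

lemma growth_add (S : Set X) (K m : ℕ) :
    growth 𝒞 S (K + m) = growth (fun j => 𝒞 (K + j)) (growth 𝒞 S K) m := by
  induction m with
  | zero => rfl
  | succ m ih => simp only [growth, ← ih]; rfl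

lemma growth_subset_growth_succ (hcover : ∀ k, ⋃₀ 𝒞 k = univ) (S : Set X) (k : ℕ) :
    growth 𝒞 S k ⊆ growth 𝒞 S (k + 1) := by
  intro z hz
  obtain ⟨P, hP, hzP⟩ := (hcover k).symm ▸ mem_univ z
  exact ⟨P, ⟨hP, z, hzP, hz⟩, hzP⟩

lemma monotone_growth (hcover : ∀ k, ⋃₀ 𝒞 k = univ) (S : Set X) : Monotone (growth 𝒞 S) :=
  monotone_nat_of_le_succ (growth_subset_growth_succ hcover S)

lemma iUnion_growth_eq_biUnion (hcover : ∀ k, ⋃₀ 𝒞 k = univ) (S : Set X) (K : ℕ) :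
    ⋃ k, growth 𝒞 S k = ⋃ B ∈ {P ∈ 𝒞 K | (P ∩ growth 𝒞 S K).Nonempty},
      ⋃ m, growth (fun j => 𝒞 (K + 1 + j)) B m := by
  have hstage : ∀ m, growth 𝒞 S (K + 1 + m) =
      ⋃ B ∈ {P ∈ 𝒞 K | (P ∩ growth 𝒞 S K).Nonempty}, growth (fun j => 𝒞 (K + 1 + j)) B m :=
    fun m => by
      rw [growth_add, ← growth_sUnion]
      rfl
  refine Subset.antisymm (iUnion_subset fun k => ?_) (iUnion₂_subset fun B hB => ?_)
  · exact (monotone_growth hcover S (Nat.le_add_left k (K + 1))).trans <|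
      (hstage k).subset.trans <| iUnion₂_mono fun B _ => subset_iUnion (growth _ B ·) k
  · exact iUnion_subset fun m => (subset_biUnion_of_mem (u := fun B => growth _ B m) hB).trans <|
      (hstage m).symm.subset.trans (subset_iUnion _ (K + 1 + m))

lemma isPreconnected_growth [TopologicalSpace X] (hcover : ∀ k, ⋃₀ 𝒞 k = univ)
    (hconn : ∀ k, ∀ P ∈ 𝒞 k, IsPreconnected P) {S : Set X} (hS : IsPreconnected S) (k : ℕ) :
    IsPreconnected (growth 𝒞 S k) := by
  induction k with
  | zero => exact hS
  | succ k ih =>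
    have hpiece : ∀ P ∈ {P ∈ 𝒞 k | (P ∩ growth 𝒞 S k).Nonempty},
        P ∪ growth 𝒞 S k ⊆ growth 𝒞 S (k + 1) ∧ IsPreconnected (P ∪ growth 𝒞 S k) :=
      fun P hP => ⟨union_subset (subset_sUnion_of_mem hP)
        (growth_subset_growth_succ hcover S k), IsPreconnected.union' hP.2 (hconn k P hP.1) ih⟩
    refine isPreconnected_of_forall_pair ?_
    rintro y ⟨P, hP, hyP⟩ z ⟨Q, hQ, hzQ⟩
    obtain ⟨w, -, hw⟩ := hP.2
    exact ⟨(P ∪ growth 𝒞 S k) ∪ (Q ∪ growth 𝒞 S k),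
      union_subset (hpiece P hP).1 (hpiece Q hQ).1, Or.inl (Or.inl hyP), Or.inr (Or.inl hzQ),
      (hpiece P hP).2.union' ⟨w, Or.inr hw, Or.inr hw⟩ (hpiece Q hQ).2⟩

lemma growth_subset_cthickening [MetricSpace X] {c : ℝ} (hc : 0 ≤ c)
    (hdiam : ∀ k, ∀ P ∈ 𝒞 k, Bornology.IsBounded P ∧ diam P ≤ c * (1 / 2) ^ k)
    (S : Set X) (k : ℕ) : growth 𝒞 S k ⊆ cthickening (2 * c - 2 * c * (1 / 2) ^ k) S := by
  induction k with
  | zero =>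
    simp only [growth, pow_zero, mul_one, sub_self, cthickening_zero]
    exact subset_closure
  | succ k ih =>
    rintro z ⟨P, ⟨hP, p, hpP, hp⟩, hzP⟩
    have hzp : dist z p ≤ c * (1 / 2) ^ k :=
      (dist_le_diam_of_mem (hdiam k P hP).1 hzP hpP).trans (hdiam k P hP).2
    have h2 : (0 : ℝ) ≤ 2 * c - 2 * c * (1 / 2) ^ k := by
      have : (1 / 2 : ℝ) ^ k ≤ 1 := pow_le_one₀ (by norm_num) (by norm_num)
      nlinarith
    have := cthickening_cthickening_subset (by positivity) h2 S
      (mem_cthickening_of_dist_le z p _ _ (ih hp) hzp)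
    convert this using 2
    ring

end Growth

section ShrinkingCover

variable {X : Type*} [MetricSpace X]

lemma exists_finite_closed_preconnected_cover [CompactSpace X] [LocallyConnectedSpace X]
    {r : ℝ} (hr : 0 < r) : ∃ F : Set (Set X), F.Finite ∧ ⋃₀ F = univ ∧
      ∀ P ∈ F, IsClosed P ∧ IsPreconnected P ∧ diam P ≤ r := by
  set C : X → Set X := fun z => connectedComponentIn (ball z (r / 2)) z
  obtain ⟨t, -, ht⟩ := isCompact_univ.elim_nhds_subcover C
    fun z _ => connectedComponentIn_mem_nhds (ball_mem_nhds z (half_pos hr))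
  refine ⟨(fun z => closure (C z)) '' t, t.finite_toSet.image _, ?_, ?_⟩
  · refine eq_univ_of_univ_subset (ht.trans ?_)
    rw [sUnion_image]
    exact iUnion₂_mono fun z _ => subset_closure
  · rintro _ ⟨z, -, rfl⟩
    refine ⟨isClosed_closure, isPreconnected_connectedComponentIn.closure, ?_⟩
    have hsub : closure (C z) ⊆ closedBall z (r / 2) :=
      (closure_mono (connectedComponentIn_subset _ _)).trans closure_ball_subset_closedBall
    linarith [diam_le_of_subset_closedBall (half_pos hr).le hsub]

structure IsShrinkingCover (c : ℝ) (𝒞 : ℕ → Set (Set X)) : Prop where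
  finite : ∀ k, (𝒞 k).Finite
  sUnion_eq : ∀ k, ⋃₀ 𝒞 k = univ
  isClosed : ∀ k, ∀ P ∈ 𝒞 k, IsClosed P
  isPreconnected : ∀ k, ∀ P ∈ 𝒞 k, IsPreconnected P
  isBounded_and_diam_le : ∀ k, ∀ P ∈ 𝒞 k, Bornology.IsBounded P ∧ diam P ≤ c * (1 / 2) ^ k

lemma exists_isShrinkingCover [CompactSpace X] [LocallyConnectedSpace X] {c : ℝ} (hc : 0 < c) :
    ∃ 𝒞 : ℕ → Set (Set X), IsShrinkingCover c 𝒞 := by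
  choose 𝒞 hfin hcover hP using fun k : ℕ =>
    exists_finite_closed_preconnected_cover (X := X) (by positivity : 0 < c * (1 / 2) ^ k)
  exact ⟨𝒞, hfin, hcover, fun k P hPk => (hP k P hPk).1, fun k P hPk => (hP k P hPk).2.1,
    fun k P hPk => ⟨isBounded_of_compactSpace, (hP k P hPk).2.2⟩⟩

namespace IsShrinkingCover

variable {c : ℝ} {𝒞 : ℕ → Set (Set X)}

lemma shift (h : IsShrinkingCover c 𝒞) (n : ℕ) :
    IsShrinkingCover (c * (1 / 2) ^ n) (fun k => 𝒞 (n + k)) where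
  finite k := h.finite (n + k)
  sUnion_eq k := h.sUnion_eq (n + k)
  isClosed k := h.isClosed (n + k)
  isPreconnected k := h.isPreconnected (n + k)
  isBounded_and_diam_le k P hP := by
    rw [mul_assoc, ← pow_add]
    exact h.isBounded_and_diam_le (n + k) P hP

lemma growth_subset_cthickening_two_mul (h : IsShrinkingCover c 𝒞) (hc : 0 ≤ c) (S : Set X)
    (k : ℕ) : growth 𝒞 S k ⊆ cthickening (2 * c) S :=
  (growth_subset_cthickening hc h.isBounded_and_diam_le S k).trans <|
    cthickening_mono (sub_le_self _ (by positivity)) S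

/-- For the pieces, take the closures of what grows out of each piece of `𝒞 K` met at stage `K`
(see `iUnion_growth_eq_biUnion`): it stays within `c / 2 ^ K` of that piece. -/
lemma hasPropertyS_closure_iUnion_growth (h : IsShrinkingCover c 𝒞) (hc : 0 ≤ c)
    (S : Set X) : HasPropertyS (closure (⋃ k, growth 𝒞 S k)) := by
  intro δ hδ
  have hlim : Tendsto (fun K : ℕ => 3 * c * (1 / 2 : ℝ) ^ K) atTop (𝓝 0) := by
    simpa using (tendsto_pow_atTop_nhds_zero_of_lt_one (by norm_num : (0 : ℝ) ≤ 1 / 2)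
      (by norm_num)).const_mul (3 * c)
  obtain ⟨K, hK⟩ := (hlim.eventually (gt_mem_nhds hδ)).exists
  set F := {P ∈ 𝒞 K | (P ∩ growth 𝒞 S K).Nonempty}
  set 𝒞' : ℕ → Set (Set X) := fun j => 𝒞 (K + 1 + j)
  set V : Set X → Set X := fun B => ⋃ m, growth 𝒞' B m
  have hU := iUnion_growth_eq_biUnion h.sUnion_eq S K
  have hVB : ∀ B ∈ F, closure (V B) ⊆ cthickening (c * (1 / 2) ^ K) B := fun B _ =>
    closure_minimal (iUnion_subset fun m => (h.shift (K + 1)).growth_subset_cthickening_two_mul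
      (by positivity) B m |>.trans (cthickening_mono (le_of_eq (by ring)) B)) isClosed_cthickening
  refine ⟨(fun B => closure (V B)) '' F, (h.finite K).subset (sep_subset _ _) |>.image _, ?_, ?_⟩
  · rw [sUnion_image, ← ((h.finite K).subset (sep_subset _ _)).closure_biUnion, ← hU]
  rintro _ ⟨B, hB, rfl⟩
  obtain ⟨hBbdd, hBdiam⟩ := h.isBounded_and_diam_le K B hB.1
  obtain ⟨b, hb, -⟩ := hB.2
  have hbV : b ∈ ⋂ m, growth 𝒞' B m :=
    mem_iInter.2 fun m => monotone_growth (h.shift (K + 1)).sUnion_eq B (Nat.zero_le m) hb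
  refine ⟨closure_mono (hU ▸ subset_biUnion_of_mem (u := V) hB), isClosed_closure,
    (isPreconnected_iUnion ⟨b, hbV⟩ fun m => isPreconnected_growth (h.shift (K + 1)).sUnion_eq
      (h.shift (K + 1)).isPreconnected (h.isPreconnected K B hB.1) m).closure,
    hBbdd.cthickening.subset (hVB B hB), ?_⟩
  calc diam (closure (V B)) ≤ diam (cthickening (c * (1 / 2) ^ K) B) :=
        diam_mono (hVB B hB) hBbdd.cthickening
    _ ≤ diam B + 2 * (c * (1 / 2) ^ K) := diam_cthickening_le B (by positivity)
    _ ≤ δ := by linarith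

end IsShrinkingCover

end ShrinkingCover

theorem exists_isClosed_isConnected_locallyConnectedSpace_mem_nhds {X : Type*} [MetricSpace X]
    [CompactSpace X] [LocallyConnectedSpace X] (x : X) {ε : ℝ} (hε : 0 < ε) :
    ∃ N ∈ 𝓝 x, IsClosed N ∧ IsConnected N ∧ LocallyConnectedSpace N ∧ diam N ≤ ε := by
  obtain ⟨𝒞, h⟩ := exists_isShrinkingCover (X := X) (by positivity : 0 < ε / 4)
  set U := ⋃ k, growth 𝒞 {x} k
  have hxU : ∀ k, x ∈ growth 𝒞 {x} k := fun k =>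
    monotone_growth h.sUnion_eq {x} (Nat.zero_le k) rfl
  have hnhds : growth 𝒞 {x} 1 ∈ 𝓝 x := by
    simpa [growth, inter_singleton_nonempty] using
      (h.finite 0).sUnion_mem_nhdsWithin_of_isClosed (h.isClosed 0) (h.sUnion_eq 0).ge x
  have hball : closure U ⊆ closedBall x (ε / 2) := by
    refine closure_minimal (iUnion_subset fun k => ?_) isClosed_closedBall
    have := h.growth_subset_cthickening_two_mul (by positivity) {x} k
    rwa [cthickening_singleton x (by positivity), show 2 * (ε / 4) = ε / 2 by ring] at this
  refine ⟨closure U, mem_of_superset hnhds (subset_closure.trans' (subset_iUnion _ 1)),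
    isClosed_closure, ⟨⟨x, subset_closure (mem_iUnion.2 ⟨0, rfl⟩)⟩, ?_⟩,
    (h.hasPropertyS_closure_iUnion_growth (by positivity) {x}).locallyConnectedSpace, ?_⟩
  · exact (isPreconnected_iUnion ⟨x, mem_iInter.2 hxU⟩ fun k => isPreconnected_growth
      h.sUnion_eq h.isPreconnected isPreconnected_singleton k).closure
  · linarith [diam_le_of_subset_closedBall (by positivity) hball]

theorem stmt_11_general {X : Type*} [MetricSpace X] [CompactSpace X]
    [LocallyConnectedSpace X] (h : ¬ IsLocalDendrite X) :
    (∀ ε > (0 : ℝ), ∃ S : Set X, IsSimpleClosedCurve S ∧ Metric.diam S < ε) ∧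
      ∃ Sn : ℕ → Set X, (∀ n, IsSimpleClosedCurve (Sn n)) ∧
        Filter.Tendsto (fun n => Metric.diam (Sn n)) Filter.atTop (nhds 0) := by
  obtain ⟨y, hy⟩ : ∃ y : X, ∀ N ∈ 𝓝 y, IsClosed N → ¬ IsDendrite N := by
    simpa [IsLocalDendrite] using h
  have small : ∀ ε > (0 : ℝ), ∃ S : Set X, IsSimpleClosedCurve S ∧ diam S < ε := by
    intro ε hε
    obtain ⟨N, hN, hNclosed, hNconn, hNlc, hNdiam⟩ :=
      exists_isClosed_isConnected_locallyConnectedSpace_mem_nhds y (half_pos hε)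
    obtain ⟨S, hSN, hS⟩ : ∃ S ⊆ N, IsSimpleClosedCurve S := by
      simpa [IsDendrite, hNclosed.isCompact, hNconn, hNlc] using hy N hN hNclosed
    exact ⟨S, hS, (diam_mono hSN isBounded_of_compactSpace).trans_lt (by linarith)⟩
  choose Sn hSn hdiam using fun n : ℕ => small (1 / (n + 1)) Nat.one_div_pos_of_nat
  exact ⟨small, Sn, hSn, squeeze_zero (fun n => diam_nonneg) (fun n => (hdiam n).le)
    tendsto_one_div_add_atTop_nhds_zero_nat⟩

/-- A locally connected metric continuum which is not a local dendrite contains arbitrarily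
small simple closed curves; in fact a sequence of simple closed curves with diameters
tending to zero. -/
theorem stmt_11 {X : Type*} [MetricSpace X] [CompactSpace X] [ConnectedSpace X] [Nonempty X]
    [LocallyConnectedSpace X] (h : ¬ IsLocalDendrite X) :
    (∀ ε > (0 : ℝ), ∃ S : Set X, IsSimpleClosedCurve S ∧ Metric.diam S < ε) ∧
      ∃ Sn : ℕ → Set X, (∀ n, IsSimpleClosedCurve (Sn n)) ∧
        Filter.Tendsto (fun n => Metric.diam (Sn n)) Filter.atTop (nhds 0) :=
  stmt_11_general h
end

section
/- Let B be a nonempty compact metric space and let C ⊆ B be a nonempty closed subset that is homeomorphic to the Cantor space {0,1}^ℕ and is a retract of B. Then B does not have the periodic point property; that is, there exists a continuous map g : B → B with no periodic points. -/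
open Function Finset

namespace Odometer

/-- The carry into digit `m` when one is added to the binary expansion `x`. -/
def carry (x : ℕ → Bool) : ℕ → Bool
  | 0 => true
  | m + 1 => carry x m && x m

def odometer (x : ℕ → Bool) : ℕ → Bool := fun m => xor (x m) (carry x m)

def truncation (m : ℕ) (x : ℕ → Bool) : ℕ := ∑ k ∈ range m, (x k).toNat * 2 ^ k

theorem continuous_carry (m : ℕ) : Continuous fun x => carry x m := by
  induction m with
  | zero => exact continuous_const
  | succ m ih =>
    exact (continuous_of_discreteTopology (f := fun p : Bool × Bool => p.1 && p.2)).comp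
      (ih.prodMk (continuous_apply m))

theorem continuous_odometer : Continuous odometer :=
  continuous_pi fun m =>
    (continuous_of_discreteTopology (f := fun p : Bool × Bool => xor p.1 p.2)).comp
      ((continuous_apply m).prodMk (continuous_carry m))

theorem truncation_odometer_add_carry (m : ℕ) (x : ℕ → Bool) :
    truncation m (odometer x) + (carry x m).toNat * 2 ^ m = truncation m x + 1 := by
  induction m with
  | zero => simp [truncation, carry]
  | succ m ih =>
    have half_adder (a b : Bool) : (xor a b).toNat + 2 * (b && a).toNat = a.toNat + b.toNat := by
      cases a <;> cases b <;> rfl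
    simp only [truncation, sum_range_succ, carry, odometer] at ih ⊢
    have := half_adder (x m) (carry x m)
    calc _ = (∑ k ∈ range m, (xor (x k) (carry x k)).toNat * 2 ^ k)
              + ((xor (x m) (carry x m)).toNat + 2 * (carry x m && x m).toNat) * 2 ^ m := by ring
      _ = _ := by rw [this]; linarith

theorem truncation_odometer (m : ℕ) (x : ℕ → Bool) :
    (truncation m (odometer x) : ZMod (2 ^ m)) = truncation m x + 1 := by
  have h := congrArg (Nat.cast : ℕ → ZMod (2 ^ m)) (truncation_odometer_add_carry m x)
  rwa [Nat.cast_add, Nat.cast_mul, ZMod.natCast_self, mul_zero, add_zero, Nat.cast_add,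
    Nat.cast_one] at h

theorem truncation_iterate_odometer (m n : ℕ) (x : ℕ → Bool) :
    (truncation m (odometer^[n] x) : ZMod (2 ^ m)) = truncation m x + n := by
  have h : Semiconj (fun y => (truncation m y : ZMod (2 ^ m))) odometer (· + 1) :=
    truncation_odometer m
  simp only [(h.iterate_right n).eq, add_right_iterate_apply, nsmul_eq_mul, mul_one]

theorem not_isPeriodicPt_odometer {n : ℕ} (hn : 0 < n) (x : ℕ → Bool) :
    ¬ IsPeriodicPt odometer n x := by
  intro hx
  have h := truncation_iterate_odometer n n x
  rw [hx.eq, left_eq_add, ZMod.natCast_eq_zero_iff] at h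
  exact (Nat.le_of_dvd hn h).not_gt Nat.lt_two_pow_self

end Odometer

open Odometer

theorem Function.LeftInverse.semiconj_comp {X Y : Type*} {ι : Y → X} {ρ : X → Y}
    (h : LeftInverse ρ ι) (f : Y → Y) : Semiconj ρ (ι ∘ f ∘ ρ) f :=
  fun x => h (f (ρ x))

theorem exists_continuous_aperiodic_of_leftInverse {X : Type*} [TopologicalSpace X]
    {ι : (ℕ → Bool) → X} {ρ : X → ℕ → Bool} (hι : Continuous ι) (hρ : Continuous ρ)
    (h : LeftInverse ρ ι) :
    ∃ g : X → X, Continuous g ∧ ∀ (x : X) (n : ℕ), 0 < n → ¬ IsPeriodicPt g n x :=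
  ⟨ι ∘ odometer ∘ ρ, hι.comp (continuous_odometer.comp hρ), fun x _ hn hx =>
    not_isPeriodicPt_odometer hn (ρ x) (hx.map (h.semiconj_comp odometer))⟩

theorem stmt_16_general {B : Type*} [MetricSpace B]
    (C : Set B)
    (hCantor : Nonempty (↥C ≃ₜ (ℕ → Bool)))
    (r : B → B) (hr : Continuous r) (hrC : ∀ x, r x ∈ C) (hretr : ∀ c ∈ C, r c = c) :
    ¬ HasPPP B ∧ ∃ g : B → B, Continuous g ∧ ∀ (x : B) (n : ℕ), 1 ≤ n → g^[n] x ≠ x := by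
  obtain ⟨e⟩ := hCantor
  obtain ⟨g, hg, hg_aperiodic⟩ :=
    exists_continuous_aperiodic_of_leftInverse (ι := fun y => (e.symm y : B))
      (ρ := fun x => e ⟨r x, hrC x⟩) (continuous_subtype_val.comp e.symm.continuous)
      (e.continuous.comp (hr.subtype_mk hrC))
      fun y => by simp only [hretr _ (e.symm y).2, Subtype.coe_eta, e.apply_symm_apply]
  refine ⟨fun hPPP => ?_, g, hg, fun x n hn => hg_aperiodic x n hn⟩
  obtain ⟨x, n, hn, hx⟩ := hPPP g hg
  exact hg_aperiodic x n hn hx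

/-- A nonempty compact metric space retracting onto a closed copy of the Cantor set does not
have the periodic point property. -/
theorem stmt_16 {B : Type*} [MetricSpace B] [CompactSpace B] [Nonempty B]
    (C : Set B) (hCne : C.Nonempty) (hCcl : IsClosed C)
    (hCantor : Nonempty (↥C ≃ₜ (ℕ → Bool)))
    (r : B → B) (hr : Continuous r) (hrC : ∀ x, r x ∈ C) (hretr : ∀ c ∈ C, r c = c) :
    ¬ HasPPP B ∧ ∃ g : B → B, Continuous g ∧ ∀ (x : B) (n : ℕ), 1 ≤ n → g^[n] x ≠ x :=
  stmt_16_general C hCantor r hr hrC hretr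
end

section
/- Let B be a compact metric space and let C ⊆ B be a nonempty closed subset that contains at most one point of each connected component of B. Then C is a retract of B, i.e., there exists a continuous map r : B → C with r(c) = c for all c ∈ C. -/
/-!
Points of `C` in different components of the compact metric space `B` are separated by a clopen
set, and `B` has only countably many clopen sets (each is a finite union of basic opens). Their
indicators give a continuous `φ : B → ℕ → Bool` that is injective on `C`, hence a homeomorphism
from `C` onto a closed subset of the Cantor space. Closed nonempty subsets of the Cantor space
are retracts of it, and transporting such a retraction back through `φ` retracts `B` onto `C`.
-/

open Set Topology TopologicalSpace

theorem countable_setOf_isClopen {X : Type*} [TopologicalSpace X] [CompactSpace X]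
    [SecondCountableTopology X] : {U : Set X | IsClopen U}.Countable := by
  obtain ⟨b, hbc, -, hb⟩ := exists_countable_basis X
  have : Countable b := hbc.to_subtype
  refine (countable_range fun t : Finset b => ((↑) '' (t : Set b)).sUnion).mono fun U hU => ?_
  obtain ⟨t, rfl⟩ :=
    eq_sUnion_finset_of_isTopologicalBasis_of_isCompact_open b hb U hU.isClosed.isCompact hU.isOpen
  exact ⟨t, rfl⟩

theorem exists_continuous_injOn_nat_bool {X : Type*} [TopologicalSpace X] [CompactSpace X]
    [T2Space X] [SecondCountableTopology X] {s : Set X}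
    (hs : ∀ x ∈ s, ∀ y ∈ s, y ∈ connectedComponent x → x = y) :
    ∃ φ : X → ℕ → Bool, Continuous φ ∧ InjOn φ s := by
  obtain ⟨u, hu⟩ := (countable_setOf_isClopen (X := X)).exists_eq_range ⟨∅, isClopen_empty⟩
  have hclopen : ∀ n, IsClopen (u n) := fun n => (hu ▸ mem_range_self n : u n ∈ {U | IsClopen U})
  refine ⟨fun x n => (u n).boolIndicator x,
    continuous_pi fun n => (continuous_boolIndicator_iff_isClopen _).mpr (hclopen n),
    fun x hx y hy hxy => hs x hx y hy ?_⟩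
  rw [connectedComponent_eq_iInter_isClopen, mem_iInter]
  rintro ⟨U, hU, hxU⟩
  obtain ⟨n, rfl⟩ : U ∈ range u := hu ▸ hU
  rw [mem_iff_boolIndicator] at hxU ⊢
  exact (congrFun hxy n).symm.trans hxU

theorem exists_retraction_of_injOn_nat_bool {X : Type*} [TopologicalSpace X] {s : Set X}
    (hs : IsCompact s) (hne : s.Nonempty) {φ : X → ℕ → Bool} (hφ : Continuous φ)
    (hinj : InjOn φ s) :
    ∃ r : X → X, Continuous r ∧ (∀ x, r x ∈ s) ∧ ∀ x ∈ s, r x = x := by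
  have : CompactSpace s := isCompact_iff_compactSpace.mp hs
  have : Nonempty s := hne.to_subtype
  have hg : IsClosedEmbedding (s.domRestrict φ) :=
    (hφ.comp continuous_subtype_val).isClosedEmbedding (injOn_iff_injective.mp hinj)
  obtain ⟨ρ, hρ_fix, hρ_range, hρ⟩ :=
    PiNat.exists_retraction_of_isClosed hg.isClosed_range (range_nonempty _)
  let e := hg.isEmbedding.toHomeomorph
  refine ⟨fun x => e.symm ⟨ρ (φ x), hρ_range ▸ mem_range_self _⟩,
    continuous_subtype_val.comp (e.symm.continuous.comp ((hρ.comp hφ).subtype_mk _)),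
    fun x => Subtype.prop _, fun x hx => ?_⟩
  simp only [hρ_fix (φ x) ⟨⟨x, hx⟩, rfl⟩]
  exact congrArg Subtype.val (hg.isEmbedding.toHomeomorph_symm_apply ⟨x, hx⟩)

/-- A nonempty closed subset of a compact metric space meeting each connected component in
at most one point is a retract. -/
theorem stmt_18 {B : Type*} [MetricSpace B] [CompactSpace B]
    (C : Set B) (hCne : C.Nonempty) (hCcl : IsClosed C)
    (hone : ∀ x ∈ C, ∀ y ∈ C, y ∈ connectedComponent x → x = y) :
    ∃ r : B → B, Continuous r ∧ (∀ x, r x ∈ C) ∧ ∀ c ∈ C, r c = c := by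
  obtain ⟨φ, hφ, hinj⟩ := exists_continuous_injOn_nat_bool hone
  exact exists_retraction_of_injOn_nat_bool hCcl.isCompact hCne hφ hinj
end

section
/- Let X be a metric continuum and let A ⊆ B be subcontinua of X (nonempty compact connected subsets). Then there exists a map α : [0,1] → C(X) into the hyperspace of subcontinua of X, continuous with respect to the Hausdorff metric, such that α(0) = A, α(1) = B, and α(s) ⊆ α(t) whenever 0 ≤ s ≤ t ≤ 1. -/
/-!
Fix a maximal chain `𝒞` of subcontinua between `A` and `B`. It is closed under intersections
and closures of unions of subchains, and by boundary bumping it has no gaps: between two nested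
members lies a third. A Whitney-type function `ω`, built from a dense sequence, increases strictly
along `𝒞`; the closure properties and the absence of gaps make `ω` map `𝒞` onto `[ω A, ω B]`.
The arc sends `t` to the member of weight `ω A + t (ω B - ω A)`; it is continuous because nested
compacta with close weights are Hausdorff-close.
-/

open Metric Set TopologicalSpace

section Chains

variable {α : Type*}

theorem IsChain.directedOn_supset {F : Set (Set α)} (hF : IsChain (· ⊆ ·) F) :
    DirectedOn (· ⊇ ·) F := fun K hK L hL =>
  (hF.total hK hL).elim (fun h => ⟨K, hK, subset_rfl, h⟩) fun h => ⟨L, hL, h, subset_rfl⟩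

theorem IsChain.sInter_subset_or_subset_sInter {𝒞 F : Set (Set α)} (h𝒞 : IsChain (· ⊆ ·) 𝒞)
    (hF : F ⊆ 𝒞) {K : Set α} (hK : K ∈ 𝒞) : ⋂₀ F ⊆ K ∨ K ⊆ ⋂₀ F := by
  by_cases h : ∀ L ∈ F, K ⊆ L
  · exact Or.inr (subset_sInter h)
  · push Not at h
    obtain ⟨L, hLF, hKL⟩ := h
    exact Or.inl ((sInter_subset_of_mem hLF).trans ((h𝒞.total (hF hLF) hK).resolve_right hKL))

theorem IsChain.closure_sUnion_subset_or_subset [TopologicalSpace α] {𝒞 F : Set (Set α)}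
    (h𝒞 : IsChain (· ⊆ ·) 𝒞) (hF : F ⊆ 𝒞) {K : Set α} (hK : K ∈ 𝒞) (hKc : IsClosed K) :
    closure (⋃₀ F) ⊆ K ∨ K ⊆ closure (⋃₀ F) := by
  by_cases h : ∃ L ∈ F, K ⊆ L
  · obtain ⟨L, hLF, hKL⟩ := h
    exact Or.inr (hKL.trans ((subset_sUnion_of_mem hLF).trans subset_closure))
  · push Not at h
    exact Or.inl (closure_minimal (sUnion_subset fun L hLF =>
      (h𝒞.total (hF hLF) hK).resolve_right (h L hLF)) hKc)

structure IsMaxChainIn (S 𝒞 : Set (Set α)) : Prop where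
  subset : 𝒞 ⊆ S
  isChain : IsChain (· ⊆ ·) 𝒞
  mem_of_forall : ∀ M ∈ S, (∀ K ∈ 𝒞, K ⊆ M ∨ M ⊆ K) → M ∈ 𝒞

theorem exists_isMaxChainIn (S : Set (Set α)) : ∃ 𝒞, IsMaxChainIn S 𝒞 := by
  obtain ⟨c, hc, -⟩ := (IsChain.empty : IsChain (· ≤ ·) (∅ : Set S)).exists_maxChain
  refine ⟨Subtype.val '' c, image_subset_iff.2 fun K _ => K.2,
    hc.isChain.image_of_map_rel (· ≤ ·) (· ⊆ ·) Subtype.val fun _ _ h => h, fun M hM hcmp => ?_⟩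
  have : IsChain (· ≤ ·) (insert ⟨M, hM⟩ c) :=
    hc.isChain.insert fun K hK _ => (hcmp K ⟨K, hK, rfl⟩).symm
  exact ⟨⟨M, hM⟩, hc.2 this (subset_insert _ _) ▸ mem_insert _ _, rfl⟩

end Chains

section CompactChains

variable {X : Type*}

theorem IsChain.exists_mem_subset_of_sInter_subset [TopologicalSpace X] [T2Space X]
    {F : Set (Set X)} (hne : F.Nonempty) (hF : IsChain (· ⊆ ·) F)
    (hcomp : ∀ K ∈ F, IsCompact K) {U : Set X} (hU : IsOpen U) (hFU : ⋂₀ F ⊆ U) :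
    ∃ K ∈ F, K ⊆ U := by
  have : Nonempty F := hne.to_subtype
  obtain ⟨⟨K, hK⟩, hKU⟩ := exists_subset_nhds_of_isCompact' hF.directedOn_supset.directed_val
    (fun K => hcomp K K.2) (fun K => (hcomp K K.2).isClosed)
    (fun x hx => hU.mem_nhds (hFU (by simpa [sInter_eq_iInter] using hx)))
  exact ⟨K, hK, hKU⟩

theorem IsChain.isConnected_sInter [TopologicalSpace X] [T4Space X]
    {F : Set (Set X)} (hne : F.Nonempty) (hF : IsChain (· ⊆ ·) F)
    (hcomp : ∀ K ∈ F, IsCompact K) (hconn : ∀ K ∈ F, IsConnected K) : IsConnected (⋂₀ F) := by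
  have : Nonempty F := hne.to_subtype
  refine ⟨IsCompact.nonempty_sInter_of_directed_nonempty_isCompact_isClosed hF.directedOn_supset
    (fun K hK => (hconn K hK).nonempty) hcomp fun K hK => (hcomp K hK).isClosed, ?_⟩
  rw [isPreconnected_iff_subset_of_fully_disjoint_closed
    (isClosed_sInter fun K hK => (hcomp K hK).isClosed)]
  intro u v hu hv huv hdisj
  obtain ⟨U, V, hUo, hVo, huU, hvV, hUV⟩ := normal_separation hu hv hdisj
  obtain ⟨K, hKF, hKUV⟩ := hF.exists_mem_subset_of_sInter_subset hne hcomp (hUo.union hVo)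
    (huv.trans (union_subset_union huU hvV))
  have hIK : ⋂₀ F ⊆ K := sInter_subset_of_mem hKF
  rcases (hconn K hKF).isPreconnected.subset_or_subset hUo hVo hUV hKUV with hKU | hKV
  · exact Or.inl fun x hx => (huv hx).resolve_right
      fun hxv => hUV.notMem_of_mem_left (hKU (hIK hx)) (hvV hxv)
  · exact Or.inr fun x hx => (huv hx).resolve_left
      fun hxu => hUV.notMem_of_mem_left (huU hxu) (hKV (hIK hx))

variable [MetricSpace X]

theorem IsChain.exists_mem_subset_thickening_sInter {F : Set (Set X)} (hne : F.Nonempty)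
    (hF : IsChain (· ⊆ ·) F) (hcomp : ∀ K ∈ F, IsCompact K) {δ : ℝ} (hδ : 0 < δ) :
    ∃ K ∈ F, K ⊆ thickening δ (⋂₀ F) :=
  hF.exists_mem_subset_of_sInter_subset hne hcomp isOpen_thickening (self_subset_thickening hδ _)

theorem IsChain.exists_mem_closure_sUnion_subset_thickening {F : Set (Set X)}
    (hne : F.Nonempty) (hF : IsChain (· ⊆ ·) F) (hcomp : IsCompact (closure (⋃₀ F)))
    {δ : ℝ} (hδ : 0 < δ) : ∃ K ∈ F, closure (⋃₀ F) ⊆ thickening δ K := by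
  have : Nonempty F := hne.to_subtype
  have hcover : closure (⋃₀ F) ⊆ ⋃ K : F, thickening δ (K : Set X) := fun x hx => by
    obtain ⟨y, ⟨L, hLF, hyL⟩, hxy⟩ := mem_closure_iff.mp hx δ hδ
    exact mem_iUnion.mpr ⟨⟨L, hLF⟩, mem_thickening_iff.mpr ⟨y, hyL, hxy⟩⟩
  obtain ⟨⟨K, hK⟩, hKU⟩ := hcomp.elim_directed_cover _ (fun _ => isOpen_thickening) hcover
    (hF.directedOn.directed_val.mono_comp (g := fun K : Set X => thickening δ K) (· ⊆ ·)
      fun _ _ => thickening_subset_of_subset δ)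
  exact ⟨K, hK, hKU⟩

end CompactChains

section BoundaryBumping

variable {X : Type*}

theorem exists_isClopen_disjoint_of_disjoint_connectedComponent [TopologicalSpace X]
    [T2Space X] [CompactSpace X] {x : X} {S : Set X} (hS : IsClosed S)
    (h : Disjoint (connectedComponent x) S) : ∃ U, IsClopen U ∧ x ∈ U ∧ Disjoint U S := by
  rw [connectedComponent_eq_iInter_isClopen, disjoint_iff_inter_eq_empty, inter_comm] at h
  obtain ⟨t, ht⟩ := hS.isCompact.elim_finite_subfamily_closed _ (fun U => U.2.1.1) h
  refine ⟨⋂ U ∈ t, (U : Set X), isClopen_biInter_finset fun U _ => U.2.1,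
    mem_iInter₂.2 fun U _ => U.2.2, ?_⟩
  rwa [disjoint_iff_inter_eq_empty, inter_comm]

/-- Boundary bumping: otherwise a clopen neighbourhood of the component in `Y ∩ F` lying inside
`O` would be clopen in `Y`. -/
theorem IsPreconnected.connectedComponentIn_diff_nonempty [TopologicalSpace X] [T2Space X]
    {Y F O : Set X} (hY : IsPreconnected Y) (hYF : IsCompact (Y ∩ F)) (hO : IsOpen O)
    (hOF : O ⊆ F) (hYnF : ¬Y ⊆ F) {a : X} (ha : a ∈ Y ∩ F) :
    (_root_.connectedComponentIn (Y ∩ F) a \ O).Nonempty := by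
  by_contra hCO
  rw [not_nonempty_iff_eq_empty, sdiff_eq_empty] at hCO
  have : CompactSpace (Y ∩ F : Set X) := isCompact_iff_compactSpace.mp hYF
  obtain ⟨Z, hZ, haZ, hZO⟩ := exists_isClopen_disjoint_of_disjoint_connectedComponent
    (x := (⟨a, ha⟩ : (Y ∩ F : Set X))) (hO.isClosed_compl.preimage continuous_subtype_val)
    (by rwa [preimage_compl, disjoint_compl_right_iff_subset, ← image_subset_iff,
      ← connectedComponentIn_eq_image ha])
  obtain ⟨W, hW, rfl⟩ := isOpen_induced_iff.mp hZ.isOpen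
  set E : Set X := Subtype.val '' (Subtype.val ⁻¹' W : Set (Y ∩ F : Set X))
  have hEO : E ⊆ O := by
    rintro _ ⟨z, hz, rfl⟩
    by_contra hzO
    exact disjoint_left.mp hZO hz hzO
  have hE : Y ∩ (O ∩ W) ⊆ E := fun y ⟨hyY, hyO, hyW⟩ => ⟨⟨y, hyY, hOF hyO⟩, hyW, rfl⟩
  have hcover : Y ⊆ (O ∩ W) ∪ Eᶜ := fun y _ => by
    by_cases hyE : y ∈ E
    · obtain ⟨z, hz, rfl⟩ := hyE
      exact Or.inl ⟨hEO ⟨z, hz, rfl⟩, hz⟩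
    · exact Or.inr hyE
  obtain ⟨p, hpY, hpF⟩ := not_subset.mp hYnF
  obtain ⟨y, hyY, hyOW, hyE⟩ := hY (O ∩ W) Eᶜ (hO.inter hW)
    (hZ.isClosed.isCompact.image continuous_subtype_val).isClosed.isOpen_compl hcover
    ⟨a, ha.1, hEO ⟨_, haZ, rfl⟩, haZ⟩ ⟨p, hpY, fun hpE => hpF (hOF (hEO hpE))⟩
  exact hyE (hE ⟨hyY, hyOW⟩)

theorem exists_isConnected_ssubset_ssubset [MetricSpace X] {K L : Set X} (hK : IsCompact K)
    (hKconn : IsConnected K) (hL : IsCompact L) (hLconn : IsConnected L) (hKL : K ⊂ L) :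
    ∃ M, IsCompact M ∧ IsConnected M ∧ K ⊂ M ∧ M ⊂ L := by
  obtain ⟨p, hpL, hpK⟩ := exists_of_ssubset hKL
  obtain ⟨a, haK⟩ := hKconn.nonempty
  have hp : 0 < infDist p K := (hK.isClosed.notMem_iff_infDist_pos hKconn.nonempty).mp hpK
  set F := {x | infDist x K ≤ infDist p K / 2}
  set O := {x | infDist x K < infDist p K / 2}
  have hOF : O ⊆ F := ofPred_subset_ofPred.mpr fun _ => le_of_lt
  have hKO : K ⊆ O := fun x hx => by simpa [O, infDist_zero_of_mem hx] using hp
  have hpF : p ∉ F := fun hpF => by simp only [F, mem_ofPred_eq] at hpF; linarith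
  have haLF : a ∈ L ∩ F := ⟨hKL.subset haK, hOF (hKO haK)⟩
  have hLF : IsCompact (L ∩ F) :=
    hL.inter_right (isClosed_le (continuous_infDist_pt K) continuous_const)
  set M := connectedComponentIn (L ∩ F) a
  have hML : M ⊆ L := (connectedComponentIn_subset _ _).trans inter_subset_left
  have hKM : K ⊆ M := hKconn.isPreconnected.subset_connectedComponentIn haK
    (subset_inter hKL.subset (hKO.trans hOF))
  obtain ⟨q, hqM, hqO⟩ := hLconn.isPreconnected.connectedComponentIn_diff_nonempty hLF
    (isOpen_lt (continuous_infDist_pt K) continuous_const) hOF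
    (fun hLF => hpF (hLF hpL)) haLF
  have hMcomp : IsCompact M := by
    have : CompactSpace (L ∩ F : Set X) := isCompact_iff_compactSpace.mp hLF
    rw [show M = _ from connectedComponentIn_eq_image haLF]
    exact isClosed_connectedComponent.isCompact.image continuous_subtype_val
  refine ⟨M, hMcomp, isConnected_connectedComponentIn_iff.mpr haLF,
    (ssubset_iff_of_subset hKM).mpr ⟨q, hqM, fun hqK => hqO (hKO hqK)⟩,
    (ssubset_iff_of_subset hML).mpr ⟨p, hpL, fun hpM => hpF ?_⟩⟩
  exact (connectedComponentIn_subset _ _ hpM).2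

end BoundaryBumping

section WhitneyWeight

variable {X : Type*} [MetricSpace X]

/-- Stands in for a Whitney map; truncating at `1` makes the series converge on any metric
space. -/
noncomputable def whitneyWeight (u : ℕ → X) (K : Set X) : ℝ :=
  ∑' n, (1 / 2 : ℝ) ^ n * (1 - min (infDist (u n) K) 1)

variable {u : ℕ → X} {K L : Set X}

theorem summable_whitneyWeight (u : ℕ → X) (K : Set X) :
    Summable fun n => (1 / 2 : ℝ) ^ n * (1 - min (infDist (u n) K) 1) := by
  refine .of_nonneg_of_le (fun n => ?_) (fun n => ?_) summable_geometric_two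
  · exact mul_nonneg (by positivity) (sub_nonneg.mpr (min_le_right _ _))
  · exact mul_le_of_le_one_right (by positivity)
      (sub_le_self _ (le_min infDist_nonneg zero_le_one))

theorem summable_whitneyWeight_sub (u : ℕ → X) (K L : Set X) :
    Summable fun n => (1 / 2 : ℝ) ^ n * (min (infDist (u n) K) 1 - min (infDist (u n) L) 1) :=
  ((summable_whitneyWeight u L).sub (summable_whitneyWeight u K)).congr fun n => by ring

theorem whitneyWeight_sub_whitneyWeight (u : ℕ → X) (K L : Set X) :
    whitneyWeight u L - whitneyWeight u K =
      ∑' n, (1 / 2 : ℝ) ^ n * (min (infDist (u n) K) 1 - min (infDist (u n) L) 1) := by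
  rw [whitneyWeight, whitneyWeight,
    ← (summable_whitneyWeight u L).tsum_sub (summable_whitneyWeight u K)]
  congr 1 with n
  ring

theorem le_whitneyWeight_sub_whitneyWeight (hK : K.Nonempty) (hKL : K ⊆ L) (n : ℕ) :
    (1 / 2 : ℝ) ^ n * (min (infDist (u n) K) 1 - min (infDist (u n) L) 1) ≤
      whitneyWeight u L - whitneyWeight u K := by
  rw [whitneyWeight_sub_whitneyWeight]
  exact (summable_whitneyWeight_sub u K L).le_tsum n fun m _ => mul_nonneg (by positivity)
    (sub_nonneg.mpr (min_le_min_right 1 (infDist_le_infDist_of_subset hKL hK)))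

theorem whitneyWeight_mono (hK : K.Nonempty) (hKL : K ⊆ L) :
    whitneyWeight u K ≤ whitneyWeight u L := by
  have := le_whitneyWeight_sub_whitneyWeight (u := u) hK hKL 0
  have : 0 ≤ (1 / 2 : ℝ) ^ 0 * (min (infDist (u 0) K) 1 - min (infDist (u 0) L) 1) :=
    mul_nonneg (by positivity)
      (sub_nonneg.mpr (min_le_min_right 1 (infDist_le_infDist_of_subset hKL hK)))
  linarith

theorem sub_dist_le_min_infDist_sub_min_infDist {x y : X} {r : ℝ} (hxL : x ∈ L)
    (hxK : 2 * r ≤ infDist x K) (hr : r ≤ 1) (hxy : dist x y ≤ r) :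
    r - dist x y ≤ min (infDist y K) 1 - min (infDist y L) 1 := by
  have hyK : infDist x K ≤ infDist y K + dist x y := infDist_le_infDist_add_dist
  have hyL : infDist y L ≤ dist x y := dist_comm x y ▸ infDist_le_dist_of_mem hxL
  have := min_le_left (infDist y L) 1
  rcases min_cases (infDist y K) 1 with ⟨h, -⟩ | ⟨h, -⟩ <;> rw [h] <;> linarith

theorem whitneyWeight_lt (hu : DenseRange u) (hKc : IsClosed K) (hK : K.Nonempty) (hKL : K ⊂ L) :
    whitneyWeight u K < whitneyWeight u L := by
  obtain ⟨p, hpL, hpK⟩ := exists_of_ssubset hKL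
  have hp : 0 < infDist p K := (hKc.notMem_iff_infDist_pos hK).mp hpK
  obtain ⟨r, hr, hr2, hr1⟩ : ∃ r : ℝ, 0 < r ∧ 2 * r ≤ infDist p K ∧ r ≤ 1 :=
    ⟨min (infDist p K / 2) 1, lt_min (half_pos hp) one_pos,
      by linarith [min_le_left (infDist p K / 2) 1], min_le_right _ _⟩
  obtain ⟨n, hn⟩ := hu.exists_dist_lt p hr
  have := sub_dist_le_min_infDist_sub_min_infDist hpL hr2 hr1 hn.le
  have := le_whitneyWeight_sub_whitneyWeight (u := u) hK hKL.subset n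
  have : 0 < (1 / 2 : ℝ) ^ n * (r - dist p (u n)) := mul_pos (by positivity) (sub_pos.mpr hn)
  have : (1 / 2 : ℝ) ^ n * (r - dist p (u n)) ≤
      (1 / 2 : ℝ) ^ n * (min (infDist (u n) K) 1 - min (infDist (u n) L) 1) := by gcongr
  linarith

theorem whitneyWeight_le_add_of_subset_thickening (hK : K.Nonempty) {δ : ℝ}
    (hKL : K ⊆ thickening δ L) : whitneyWeight u K ≤ whitneyWeight u L + 2 * δ := by
  have hL : L.Nonempty := by
    by_contra hL
    rw [not_nonempty_iff_eq_empty.mp hL, thickening_empty] at hKL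
    exact hK.ne_empty (subset_empty_iff.mp hKL)
  have hδ : 0 ≤ δ := by
    obtain ⟨y, hy⟩ := hK
    exact infDist_nonneg.trans ((mem_thickening_iff_infDist_lt hL).mp (hKL hy)).le
  have hdist (n : ℕ) : infDist (u n) L - δ ≤ infDist (u n) K :=
    (le_infDist hK).mpr fun y hy => by
      have := (mem_thickening_iff_infDist_lt hL).mp (hKL hy)
      linarith [infDist_le_infDist_add_dist (x := u n) (y := y) (s := L)]
  suffices whitneyWeight u K - whitneyWeight u L ≤ 2 * δ by linarith
  calc whitneyWeight u K - whitneyWeight u L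
      ≤ ∑' n, (1 / 2 : ℝ) ^ n * δ := by
        rw [whitneyWeight_sub_whitneyWeight]
        refine Summable.tsum_le_tsum (fun n => mul_le_mul_of_nonneg_left ?_ (by positivity))
          (summable_whitneyWeight_sub u L K) (summable_geometric_two.mul_right δ)
        have := hdist n
        have := min_le_left (infDist (u n) L) 1
        have := min_le_right (infDist (u n) L) 1
        rcases min_cases (infDist (u n) K) 1 with ⟨h, -⟩ | ⟨h, -⟩ <;> rw [h] <;> linarith
    _ = 2 * δ := by rw [tsum_mul_right, tsum_geometric_two]

theorem DenseRange.exists_forall_exists_le_dist_lt [CompactSpace X] (hu : DenseRange u) {r : ℝ}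
    (hr : 0 < r) : ∃ N, ∀ x, ∃ n ≤ N, dist x (u n) < r := by
  obtain ⟨t, ht⟩ := isCompact_univ.elim_finite_subcover (fun n => ball (u n) r)
    (fun _ => isOpen_ball) fun x _ => mem_iUnion.2 (hu.exists_dist_lt x hr)
  refine ⟨t.sup id, fun x => ?_⟩
  obtain ⟨n, hn, hx⟩ := mem_iUnion₂.1 (ht (mem_univ x))
  exact ⟨n, Finset.le_sup (f := id) hn, hx⟩

theorem exists_forall_infDist_lt_of_whitneyWeight_lt_add [CompactSpace X] (hu : DenseRange u)
    {ε : ℝ} (hε : 0 < ε) : ∃ η > 0, ∀ K L : Set X, K.Nonempty → K ⊆ L →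
      whitneyWeight u L < whitneyWeight u K + η → ∀ x ∈ L, infDist x K < ε := by
  obtain ⟨r, hr, hr2, hr1⟩ : ∃ r : ℝ, 0 < r ∧ 2 * r ≤ ε ∧ r ≤ 1 :=
    ⟨min (ε / 2) 1, lt_min (half_pos hε) one_pos,
      by linarith [min_le_left (ε / 2) 1], min_le_right _ _⟩
  obtain ⟨N, hN⟩ := hu.exists_forall_exists_le_dist_lt (half_pos hr)
  refine ⟨(1 / 2 : ℝ) ^ N * (r / 2), by positivity, fun K L hK hKL hKL' x hxL => ?_⟩
  by_contra! hxK
  obtain ⟨n, hnN, hxn⟩ := hN x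
  have := sub_dist_le_min_infDist_sub_min_infDist hxL (hr2.trans hxK) hr1 (by linarith)
  have := le_whitneyWeight_sub_whitneyWeight (u := u) hK hKL n
  have : (1 / 2 : ℝ) ^ N * (r / 2) ≤
      (1 / 2 : ℝ) ^ n * (min (infDist (u n) K) 1 - min (infDist (u n) L) 1) := by
    gcongr ?_ * ?_
    · exact pow_le_pow_of_le_one (by norm_num) (by norm_num) hnN
    · linarith
  linarith

theorem continuous_of_continuous_whitneyWeight [CompactSpace X] (hu : DenseRange u)
    {Y : Type*} [TopologicalSpace Y] {f : Y → NonemptyCompacts X}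
    (hf : ∀ y z, (f y : Set X) ⊆ f z ∨ (f z : Set X) ⊆ f y)
    (hw : Continuous fun y => whitneyWeight u (f y)) : Continuous f := by
  rw [Metric.continuous_iff'] at hw ⊢
  intro y ε hε
  obtain ⟨η, hη, hclose⟩ := exists_forall_infDist_lt_of_whitneyWeight_lt_add hu (half_pos hε)
  have hdist {K L : NonemptyCompacts X} (hKL : (K : Set X) ⊆ L)
      (hw : |whitneyWeight u L - whitneyWeight u K| < η) : hausdorffDist (K : Set X) L < ε := by
    refine (hausdorffDist_le_of_infDist (half_pos hε).le (fun x hx => ?_) fun x hx => ?_).trans_lt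
      (half_lt_self hε)
    · rw [infDist_zero_of_mem (hKL hx)]
      exact (half_pos hε).le
    · exact (hclose K L K.nonempty hKL (by linarith [(abs_lt.mp hw).2]) x hx).le
  filter_upwards [hw y η hη] with z hz
  rw [Real.dist_eq] at hz
  rw [NonemptyCompacts.dist_eq]
  rcases hf z y with h | h
  · exact hdist h (by rwa [abs_sub_comm])
  · exact hausdorffDist_comm (s := (f z : Set X)) ▸ hdist h hz

end WhitneyWeight

section ChainsOfContinua

variable {X : Type*} [MetricSpace X]

def intermediateContinua (A B : Set X) : Set (Set X) :=
  {K | A ⊆ K ∧ K ⊆ B ∧ IsCompact K ∧ IsConnected K}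

namespace IsMaxChainIn

variable {A B K L : Set X} {𝒞 : Set (Set X)}

theorem isCompact_of_mem (h : IsMaxChainIn (intermediateContinua A B) 𝒞) (hK : K ∈ 𝒞) :
    IsCompact K :=
  (h.subset hK).2.2.1

theorem isConnected_of_mem (h : IsMaxChainIn (intermediateContinua A B) 𝒞) (hK : K ∈ 𝒞) :
    IsConnected K :=
  (h.subset hK).2.2.2

theorem left_mem (h : IsMaxChainIn (intermediateContinua A B) 𝒞)
    (hA : A ∈ intermediateContinua A B) : A ∈ 𝒞 :=
  h.mem_of_forall A hA fun _ hK => Or.inr (h.subset hK).1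

theorem right_mem (h : IsMaxChainIn (intermediateContinua A B) 𝒞)
    (hB : B ∈ intermediateContinua A B) : B ∈ 𝒞 :=
  h.mem_of_forall B hB fun _ hK => Or.inl (h.subset hK).2.1

theorem sInter_mem (h : IsMaxChainIn (intermediateContinua A B) 𝒞) {F : Set (Set X)}
    (hF : F ⊆ 𝒞) (hne : F.Nonempty) : ⋂₀ F ∈ 𝒞 := by
  obtain ⟨K, hK⟩ := hne
  refine h.mem_of_forall _ ⟨subset_sInter fun L hL => (h.subset (hF hL)).1,
    (sInter_subset_of_mem hK).trans (h.subset (hF hK)).2.1,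
    (h.isCompact_of_mem (hF hK)).of_isClosed_subset
      (isClosed_sInter fun L hL => (h.isCompact_of_mem (hF hL)).isClosed) (sInter_subset_of_mem hK),
    (h.isChain.mono hF).isConnected_sInter ⟨K, hK⟩ (fun L hL => h.isCompact_of_mem (hF hL))
      fun L hL => h.isConnected_of_mem (hF hL)⟩
    fun L hL => (h.isChain.sInter_subset_or_subset_sInter hF hL).symm

theorem closure_sUnion_mem (h : IsMaxChainIn (intermediateContinua A B) 𝒞) (hB : IsCompact B)
    {F : Set (Set X)} (hF : F ⊆ 𝒞) (hne : F.Nonempty) : closure (⋃₀ F) ∈ 𝒞 := by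
  obtain ⟨K, hK⟩ := hne
  have hsubB : closure (⋃₀ F) ⊆ B :=
    closure_minimal (sUnion_subset fun L hL => (h.subset (hF hL)).2.1) hB.isClosed
  refine h.mem_of_forall _ ⟨(h.subset (hF hK)).1.trans ((subset_sUnion_of_mem hK).trans
    subset_closure), hsubB, hB.of_isClosed_subset isClosed_closure hsubB,
    ⟨(h.isConnected_of_mem (hF hK)).nonempty.mono ((subset_sUnion_of_mem hK).trans subset_closure),
      (IsPreconnected.sUnion_directed (h.isChain.mono hF).directedOn
        fun L hL => (h.isConnected_of_mem (hF hL)).isPreconnected).closure⟩⟩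
    fun L hL => (h.isChain.closure_sUnion_subset_or_subset hF hL
      (h.isCompact_of_mem hL).isClosed).symm

theorem exists_ssubset_ssubset (h : IsMaxChainIn (intermediateContinua A B) 𝒞) (hK : K ∈ 𝒞)
    (hL : L ∈ 𝒞) (hKL : K ⊂ L) : ∃ M ∈ 𝒞, K ⊂ M ∧ M ⊂ L := by
  by_contra! hno
  obtain ⟨M, hMc, hMconn, hKM, hML⟩ := exists_isConnected_ssubset_ssubset (h.isCompact_of_mem hK)
    (h.isConnected_of_mem hK) (h.isCompact_of_mem hL) (h.isConnected_of_mem hL) hKL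
  refine hno M (h.mem_of_forall M ⟨(h.subset hK).1.trans hKM.subset,
    hML.subset.trans (h.subset hL).2.1, hMc, hMconn⟩ fun N hN => ?_) hKM hML
  rcases h.isChain.total hN hK with hNK | hKN
  · exact Or.inl (hNK.trans hKM.subset)
  rcases h.isChain.total hN hL with hNL | hLN
  · rcases hKN.eq_or_ssubset with rfl | hKN
    · exact Or.inl hKM.subset
    rcases hNL.eq_or_ssubset with rfl | hNL
    · exact Or.inr hML.subset
    exact absurd hNL (hno N hN hKN)
  · exact Or.inr (hML.subset.trans hLN)

variable {u : ℕ → X}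

theorem subset_iff_whitneyWeight_le (h : IsMaxChainIn (intermediateContinua A B) 𝒞)
    (hu : DenseRange u) (hK : K ∈ 𝒞) (hL : L ∈ 𝒞) :
    K ⊆ L ↔ whitneyWeight u K ≤ whitneyWeight u L := by
  refine ⟨whitneyWeight_mono (h.isConnected_of_mem hK).nonempty, fun hKL => ?_⟩
  rcases h.isChain.total hK hL with hsub | hLK
  · exact hsub
  rcases hLK.eq_or_ssubset with rfl | hLK
  · exact subset_rfl
  exact absurd hKL (whitneyWeight_lt hu (h.isCompact_of_mem hL).isClosed
    (h.isConnected_of_mem hL).nonempty hLK).not_ge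

theorem eq_of_whitneyWeight_eq (h : IsMaxChainIn (intermediateContinua A B) 𝒞)
    (hu : DenseRange u) (hK : K ∈ 𝒞) (hL : L ∈ 𝒞) (hKL : whitneyWeight u K = whitneyWeight u L) :
    K = L :=
  ((h.subset_iff_whitneyWeight_le hu hK hL).mpr hKL.le).antisymm
    ((h.subset_iff_whitneyWeight_le hu hL hK).mpr hKL.ge)

theorem exists_whitneyWeight_eq (h : IsMaxChainIn (intermediateContinua A B) 𝒞)
    (hB : IsCompact B) (hu : DenseRange u) (hK : K ∈ 𝒞) (hL : L ∈ 𝒞) {v : ℝ}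
    (hv : v ∈ Icc (whitneyWeight u K) (whitneyWeight u L)) : ∃ M ∈ 𝒞, whitneyWeight u M = v := by
  set above := {N ∈ 𝒞 | v ≤ whitneyWeight u N}
  set below := {N ∈ 𝒞 | whitneyWeight u N ≤ v}
  have habove : above ⊆ 𝒞 := sep_subset _ _
  have hbelow : below ⊆ 𝒞 := sep_subset _ _
  have hLa : L ∈ above := ⟨hL, hv.2⟩
  have hKb : K ∈ below := ⟨hK, hv.1⟩
  have hG := h.sInter_mem habove ⟨L, hLa⟩
  have hM := h.closure_sUnion_mem hB hbelow ⟨K, hKb⟩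
  have hvG : v ≤ whitneyWeight u (⋂₀ above) := le_of_forall_pos_le_add fun δ hδ => by
    obtain ⟨N, hN, hNG⟩ := (h.isChain.mono habove).exists_mem_subset_thickening_sInter
      ⟨L, hLa⟩ (fun N hN => h.isCompact_of_mem hN.1) (half_pos hδ)
    linarith [hN.2, whitneyWeight_le_add_of_subset_thickening (u := u)
      (h.isConnected_of_mem hN.1).nonempty hNG]
  have hMv : whitneyWeight u (closure (⋃₀ below)) ≤ v := le_of_forall_pos_le_add fun δ hδ => by
    obtain ⟨N, hN, hMN⟩ := (h.isChain.mono hbelow).exists_mem_closure_sUnion_subset_thickening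
      ⟨K, hKb⟩ (h.isCompact_of_mem hM) (half_pos hδ)
    linarith [hN.2, whitneyWeight_le_add_of_subset_thickening (u := u)
      (h.isConnected_of_mem hM).nonempty hMN]
  have hMG : closure (⋃₀ below) ⊆ ⋂₀ above :=
    closure_minimal (sUnion_subset fun N hN => subset_sInter fun N' hN' =>
      (h.subset_iff_whitneyWeight_le hu hN.1 hN'.1).mpr (hN.2.trans hN'.2))
      (h.isCompact_of_mem hG).isClosed
  rcases hMG.eq_or_ssubset with heq | hMG
  · exact ⟨_, hG, le_antisymm (heq ▸ hMv) hvG⟩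
  obtain ⟨N, hN, hMN, hNG⟩ := h.exists_ssubset_ssubset hM hG hMG
  rcases le_total (whitneyWeight u N) v with hNv | hvN
  · have hNb : N ∈ below := ⟨hN, hNv⟩
    exact absurd ((subset_sUnion_of_mem hNb).trans subset_closure) hMN.not_subset
  · have hNa : N ∈ above := ⟨hN, hvN⟩
    exact absurd (sInter_subset_of_mem hNa) hNG.not_subset

end IsMaxChainIn

end ChainsOfContinua

theorem stmt_19_general {X : Type*} [MetricSpace X] [CompactSpace X]
    (A B : Set X) (hAcomp : IsCompact A) (hAconn : IsConnected A)
    (hBcomp : IsCompact B) (hBconn : IsConnected B) (hAB : A ⊆ B) :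
    ∃ α : unitInterval → {K : TopologicalSpace.NonemptyCompacts X // IsConnected (K : Set X)},
      Continuous α ∧
      ((α 0 : TopologicalSpace.NonemptyCompacts X) : Set X) = A ∧
      ((α 1 : TopologicalSpace.NonemptyCompacts X) : Set X) = B ∧
      ∀ s t : unitInterval, s ≤ t →
        ((α s : TopologicalSpace.NonemptyCompacts X) : Set X) ⊆
          ((α t : TopologicalSpace.NonemptyCompacts X) : Set X) := by
  have : Nonempty X := ⟨hAconn.nonempty.some⟩
  obtain ⟨u, hu⟩ := exists_dense_seq X
  obtain ⟨𝒞, h𝒞⟩ := exists_isMaxChainIn (intermediateContinua A B)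
  have hA := h𝒞.left_mem ⟨subset_rfl, hAB, hAcomp, hAconn⟩
  have hB := h𝒞.right_mem ⟨hAB, subset_rfl, hBcomp, hBconn⟩
  set a := whitneyWeight u A
  set b := whitneyWeight u B
  have hab : a ≤ b := whitneyWeight_mono hAconn.nonempty hAB
  have hpath (t : unitInterval) : a + t * (b - a) ∈ Icc a b :=
    ⟨by nlinarith [t.2.1], by nlinarith [t.2.2]⟩
  choose K hK𝒞 hKw using fun t => h𝒞.exists_whitneyWeight_eq hBcomp hu hA hB (hpath t)
  have hmono (s t : unitInterval) (hst : s ≤ t) : K s ⊆ K t := by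
    rw [h𝒞.subset_iff_whitneyWeight_le hu (hK𝒞 s) (hK𝒞 t), hKw, hKw]
    gcongr
  let α (t : unitInterval) : {K : NonemptyCompacts X // IsConnected (K : Set X)} :=
    ⟨⟨⟨K t, h𝒞.isCompact_of_mem (hK𝒞 t)⟩, (h𝒞.isConnected_of_mem (hK𝒞 t)).nonempty⟩,
      h𝒞.isConnected_of_mem (hK𝒞 t)⟩
  have hK0 : K 0 = A := h𝒞.eq_of_whitneyWeight_eq hu (hK𝒞 0) hA (by simp [hKw, a])
  have hK1 : K 1 = B := h𝒞.eq_of_whitneyWeight_eq hu (hK𝒞 1) hB (by simp [hKw, b])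
  refine ⟨α, ?_, hK0, hK1, hmono⟩
  refine (continuous_of_continuous_whitneyWeight hu (f := fun t => (α t).1)
    (fun s t => (le_total s t).imp (hmono s t) (hmono t s)) ?_).subtype_mk _
  simp only [α, NonemptyCompacts.coe_mk, Compacts.coe_mk, hKw]
  fun_prop

/-- An order arc in the hyperspace of subcontinua: for subcontinua `A ⊆ B` of a metric
continuum `X` there is a continuous, increasing map `α : [0,1] → C(X)` with `α 0 = A`
and `α 1 = B`. -/
theorem stmt_19 {X : Type*} [MetricSpace X] [CompactSpace X] [ConnectedSpace X] [Nonempty X]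
    (A B : Set X) (hAcomp : IsCompact A) (hAconn : IsConnected A)
    (hBcomp : IsCompact B) (hBconn : IsConnected B) (hAB : A ⊆ B) :
    ∃ α : unitInterval → {K : TopologicalSpace.NonemptyCompacts X // IsConnected (K : Set X)},
      Continuous α ∧
      ((α 0 : TopologicalSpace.NonemptyCompacts X) : Set X) = A ∧
      ((α 1 : TopologicalSpace.NonemptyCompacts X) : Set X) = B ∧
      ∀ s t : unitInterval, s ≤ t →
        ((α s : TopologicalSpace.NonemptyCompacts X) : Set X) ⊆
          ((α t : TopologicalSpace.NonemptyCompacts X) : Set X) :=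
  stmt_19_general A B hAcomp hAconn hBcomp hBconn hAB
end
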